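/- Let U = ⊕_{i≥0} U₁^{⊗_B i} be the tensor algebra over a k-algebra B of a B-bimodule U₁, graded with |B| = 0 and |U₁| = 1, equipped with a degree-1 derivation d satisfying d² = 0. Let (d(B)) be the sub-bimodule of U₁ generated by the degree-1 component of d applied to B, set W = U₁/(d(B)), and let π : U₁ → W be the projection. Then the component d₁ : U₁ → U₁ ⊗_B U₁ of d descends to a well-defined B-bimodule map μ : W → W ⊗_B W satisfying (π⊗π)∘d₁ = μ∘π, and μ is coassociative. -/

import Mathlib

/-!  A minimal development of the tensor product `M ⊗_B N` over a
(possibly noncommutative) `k`-algebra `B`, where `M` is a right `B`-module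
(via `Bᵐᵒᵖ`) and `N` is a left `B`-module.  It is realized as the quotient of
`M ⊗[k] N` by the balancing relations. -/

open TensorProduct MulOpposite

set_option linter.unusedSectionVars false

section TBLib

variable (k : Type) [Field k] (B : Type) [Ring B] [Algebra k B]

variable (M N : Type)
  [AddCommGroup M] [Module k M] [Module Bᵐᵒᵖ M] [IsScalarTower k Bᵐᵒᵖ M]
  [AddCommGroup N] [Module k N] [Module B N] [IsScalarTower k B N]

/-- The balancing relations for the tensor product over `B`. -/
def balRel : Submodule k (M ⊗[k] N) :=
  Submodule.span k {x | ∃ (b : B) (m : M) (n : N), x = (op b • m) ⊗ₜ[k] n - m ⊗ₜ[k] (b • n)}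

/-- The tensor product `M ⊗_B N` over the algebra `B`. -/
abbrev TB : Type := (M ⊗[k] N) ⧸ balRel k B M N

noncomputable def TB.mk : M →ₗ[k] N →ₗ[k] TB k B M N :=
  (TensorProduct.mk k M N).compr₂ (balRel k B M N).mkQ

lemma TB.mk_def (m : M) (n : N) :
    TB.mk k B M N m n = Submodule.Quotient.mk (m ⊗ₜ[k] n) := rfl

lemma TB.mk_balance (b : B) (m : M) (n : N) :
    TB.mk k B M N (op b • m) n = TB.mk k B M N m (b • n) := by
  rw [TB.mk_def, TB.mk_def, Submodule.Quotient.eq]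
  exact Submodule.subset_span ⟨b, m, n, rfl⟩

theorem TB.ind {p : TB k B M N → Prop} (h0 : p 0)
    (hmk : ∀ m n, p (TB.mk k B M N m n))
    (hadd : ∀ x y, p x → p y → p (x + y)) : ∀ x, p x := by
  intro x
  obtain ⟨y, rfl⟩ := Submodule.Quotient.mk_surjective _ x
  induction y using TensorProduct.induction_on with
  | zero => simpa using h0
  | tmul m n => exact hmk m n
  | add a b ha hb => rw [Submodule.Quotient.mk_add]; exact hadd _ _ ha hb

theorem TB.hom_ext {P : Type} [AddCommGroup P] [Module k P]
    {f g : TB k B M N →ₗ[k] P}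
    (h : ∀ m n, f (TB.mk k B M N m n) = g (TB.mk k B M N m n)) : f = g := by
  apply LinearMap.ext; intro x
  refine TB.ind k B M N (p := fun x => f x = g x) (by simp) h (fun a b ha hb => ?_) x
  simp [map_add, ha, hb]

noncomputable def TB.lift {P : Type} [AddCommGroup P] [Module k P]
    (φ : M →ₗ[k] N →ₗ[k] P)
    (hφ : ∀ (b : B) (m : M) (n : N), φ (op b • m) n = φ m (b • n)) :
    TB k B M N →ₗ[k] P :=
  Submodule.liftQ _ (TensorProduct.lift φ) (by
    rw [balRel, Submodule.span_le]
    rintro x ⟨b, m, n, rfl⟩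
    simp only [SetLike.mem_coe, LinearMap.mem_ker, map_sub, TensorProduct.lift.tmul, hφ, sub_self])

@[simp] lemma TB.lift_mk {P : Type} [AddCommGroup P] [Module k P]
    (φ : M →ₗ[k] N →ₗ[k] P) (hφ : ∀ (b : B) (m : M) (n : N), φ (op b • m) n = φ m (b • n))
    (m : M) (n : N) :
    TB.lift k B M N φ hφ (TB.mk k B M N m n) = φ m n := rfl


section SmulLin

variable {S : Type} [Ring S] [Module S M] [SMulCommClass k S M]

/-- Scalar multiplication by `s : S` as a `k`-linear map. -/
def smulLin (s : S) : M →ₗ[k] M where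
  toFun m := s • m
  map_add' a b := smul_add s a b
  map_smul' c m := (smul_comm c s m).symm

@[simp] lemma smulLin_apply (s : S) (m : M) : smulLin k M s m = s • m := rfl

end SmulLin

section LeftAction

variable {S : Type} [Ring S] [Module S M] [SMulCommClass S Bᵐᵒᵖ M] [SMulCommClass k S M]

noncomputable def TB.lsmulHom (s : S) : TB k B M N →ₗ[k] TB k B M N :=
  TB.lift k B M N
    ((TB.mk k B M N).comp (smulLin k M s))
    (by
      intro b m n
      show TB.mk k B M N (s • (op b • m)) n = TB.mk k B M N (s • m) (b • n)
      rw [smul_comm s (op b) m, TB.mk_balance])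

@[simp] lemma TB.lsmulHom_mk (s : S) (m : M) (n : N) :
    TB.lsmulHom k B M N s (TB.mk k B M N m n) = TB.mk k B M N (s • m) n := rfl

/-- The left action of a ring `S` (acting on `M` on the left, commuting with the
right `B`-action) on `M ⊗_B N`. -/
noncomputable def TB.moduleLeft : Module S (TB k B M N) where
  smul s x := TB.lsmulHom k B M N s x
  one_smul x := by
    refine TB.ind k B M N (p := fun x => TB.lsmulHom k B M N (1 : S) x = x)
      (by simp) (fun m n => by simp) (fun a b ha hb => ?_) x
    simp only [map_add, ha, hb]
  mul_smul s t x := by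
    refine TB.ind k B M N
      (p := fun x => TB.lsmulHom k B M N (s * t) x
        = TB.lsmulHom k B M N s (TB.lsmulHom k B M N t x))
      (by simp) (fun m n => by simp [mul_smul]) (fun a b ha hb => ?_) x
    simp only [map_add, ha, hb]
  smul_zero s := map_zero _
  smul_add s x y := map_add _ x y
  add_smul s t x := by
    refine TB.ind k B M N
      (p := fun x => TB.lsmulHom k B M N (s + t) x
        = TB.lsmulHom k B M N s x + TB.lsmulHom k B M N t x)
      (by simp) (fun m n => by simp [add_smul, map_add]) (fun a b ha hb => ?_) x
    simp only [map_add, ha, hb]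
    abel
  zero_smul x := by
    refine TB.ind k B M N (p := fun x => TB.lsmulHom k B M N (0 : S) x = 0)
      (by simp) (fun m n => by simp) (fun a b ha hb => ?_) x
    simp only [map_add, ha, hb, add_zero]

end LeftAction

section LeftB

variable [Module B M] [IsScalarTower k B M] [SMulCommClass B Bᵐᵒᵖ M]

noncomputable instance TB.instModuleLeftB : Module B (TB k B M N) :=
  TB.moduleLeft k B M N (S := B)

@[simp] lemma TB.smul_mk (b : B) (m : M) (n : N) :
    b • TB.mk k B M N m n = TB.mk k B M N (b • m) n := rfl

instance TB.instTowerLeftB : IsScalarTower k B (TB k B M N) := by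
  constructor
  intro c b x
  refine TB.ind k B M N (p := fun x => (c • b) • x = c • b • x)
    (by simp) (fun m n => ?_) (fun a y ha hy => ?_) x
  · show (c • b) • TB.mk k B M N m n = c • b • TB.mk k B M N m n
    rw [TB.smul_mk, TB.smul_mk, smul_assoc, map_smul, LinearMap.smul_apply]
  · show (c • b) • (a + y) = c • b • (a + y)
    rw [smul_add, smul_add, smul_add]
    exact congrArg₂ (· + ·) ha hy

end LeftB

section RightB

variable [Module Bᵐᵒᵖ N] [IsScalarTower k Bᵐᵒᵖ N] [SMulCommClass B Bᵐᵒᵖ N]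

noncomputable def TB.rsmulHom (b : Bᵐᵒᵖ) : TB k B M N →ₗ[k] TB k B M N :=
  TB.lift k B M N
    ((TB.mk k B M N).compl₂ (smulLin k N b))
    (by
      intro c m n
      show TB.mk k B M N (op c • m) (b • n) = TB.mk k B M N m (b • (c • n))
      rw [TB.mk_balance, smul_comm c b n])

@[simp] lemma TB.rsmulHom_mk (b : Bᵐᵒᵖ) (m : M) (n : N) :
    TB.rsmulHom k B M N b (TB.mk k B M N m n) = TB.mk k B M N m (b • n) := rfl

noncomputable instance TB.instModuleRightB : Module Bᵐᵒᵖ (TB k B M N) where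
  smul b x := TB.rsmulHom k B M N b x
  one_smul x := by
    refine TB.ind k B M N (p := fun x => TB.rsmulHom k B M N (1 : Bᵐᵒᵖ) x = x)
      (by simp) (fun m n => by simp) (fun a b ha hb => ?_) x
    simp only [map_add, ha, hb]
  mul_smul s t x := by
    refine TB.ind k B M N
      (p := fun x => TB.rsmulHom k B M N (s * t) x
        = TB.rsmulHom k B M N s (TB.rsmulHom k B M N t x))
      (by simp) (fun m n => by simp [mul_smul]) (fun a b ha hb => ?_) x
    simp only [map_add, ha, hb]
  smul_zero s := map_zero _
  smul_add s x y := map_add _ x y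
  add_smul s t x := by
    refine TB.ind k B M N
      (p := fun x => TB.rsmulHom k B M N (s + t) x
        = TB.rsmulHom k B M N s x + TB.rsmulHom k B M N t x)
      (by simp) (fun m n => by simp [add_smul, map_add]) (fun a b ha hb => ?_) x
    simp only [map_add, ha, hb]
    abel
  zero_smul x := by
    refine TB.ind k B M N (p := fun x => TB.rsmulHom k B M N (0 : Bᵐᵒᵖ) x = 0)
      (by simp) (fun m n => by simp) (fun a b ha hb => ?_) x
    simp only [map_add, ha, hb, add_zero]

@[simp] lemma TB.op_smul_mk (b : Bᵐᵒᵖ) (m : M) (n : N) :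
    b • TB.mk k B M N m n = TB.mk k B M N m (b • n) := rfl

instance TB.instTowerRightB : IsScalarTower k Bᵐᵒᵖ (TB k B M N) := by
  constructor
  intro c b x
  refine TB.ind k B M N (p := fun x => (c • b) • x = c • b • x)
    (by simp) (fun m n => ?_) (fun a y ha hy => ?_) x
  · show (c • b) • TB.mk k B M N m n = c • b • TB.mk k B M N m n
    rw [TB.op_smul_mk, TB.op_smul_mk, smul_assoc, map_smul]
  · show (c • b) • (a + y) = c • b • (a + y)
    rw [smul_add, smul_add, smul_add]
    exact congrArg₂ (· + ·) ha hy

end RightB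

section Map

variable {M' N' : Type}
  [AddCommGroup M'] [Module k M'] [Module Bᵐᵒᵖ M'] [IsScalarTower k Bᵐᵒᵖ M']
  [AddCommGroup N'] [Module k N'] [Module B N'] [IsScalarTower k B N']

noncomputable def TB.map (f : M →ₗ[k] M') (g : N →ₗ[k] N')
    (hf : ∀ (b : B) (m : M), f (op b • m) = op b • f m)
    (hg : ∀ (b : B) (n : N), g (b • n) = b • g n) :
    TB k B M N →ₗ[k] TB k B M' N' :=
  TB.lift k B M N ((TB.mk k B M' N').compl₁₂ f g)
    (by intro b m n; simp [LinearMap.compl₁₂_apply, hf, hg, TB.mk_balance])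

@[simp] lemma TB.map_mk (f : M →ₗ[k] M') (g : N →ₗ[k] N')
    (hf : ∀ (b : B) (m : M), f (op b • m) = op b • f m)
    (hg : ∀ (b : B) (n : N), g (b • n) = b • g n) (m : M) (n : N) :
    TB.map k B M N f g hf hg (TB.mk k B M N m n) = TB.mk k B M' N' (f m) (g n) := rfl

end Map


section Assoc

variable (P : Type) [AddCommGroup P] [Module k P] [Module B P] [IsScalarTower k B P]
variable [Module B N] [IsScalarTower k B N]
variable [Module Bᵐᵒᵖ N] [IsScalarTower k Bᵐᵒᵖ N] [SMulCommClass B Bᵐᵒᵖ N]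

noncomputable def TB.innerPsi : P →ₗ[k] (TB k B M N →ₗ[k] TB k B M (TB k B N P)) where
  toFun p := TB.lift k B M N
      ((TB.mk k B M (TB k B N P)).compl₂ ((TB.mk k B N P).flip p))
      (by
        intro b m n
        simp only [LinearMap.compl₂_apply, LinearMap.flip_apply]
        rw [TB.mk_balance k B M (TB k B N P) b m, TB.smul_mk])
  map_add' p q := TB.hom_ext k B M N (by intro m n; simp [map_add])
  map_smul' c p := TB.hom_ext k B M N (by intro m n; simp)

noncomputable def TB.assocMap :
    TB k B (TB k B M N) P →ₗ[k] TB k B M (TB k B N P) :=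
  TB.lift k B (TB k B M N) P (TB.innerPsi k B M N P).flip
    (by
      intro b x p
      simp only [LinearMap.flip_apply]
      refine TB.ind k B M N
        (p := fun x => TB.innerPsi k B M N P p (op b • x)
          = TB.innerPsi k B M N P (b • p) x)
        (by simp) (fun m n => ?_) (fun a y ha hy => ?_) x
      · show TB.innerPsi k B M N P p (op b • TB.mk k B M N m n)
          = TB.innerPsi k B M N P (b • p) (TB.mk k B M N m n)
        rw [TB.op_smul_mk]
        simp only [TB.innerPsi, LinearMap.coe_mk, AddHom.coe_mk, TB.lift_mk,
          LinearMap.compl₂_apply, LinearMap.flip_apply]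
        rw [TB.mk_balance]
      · show TB.innerPsi k B M N P p (op b • (a + y))
          = TB.innerPsi k B M N P (b • p) (a + y)
        rw [smul_add, map_add, map_add]
        exact congrArg₂ (· + ·) ha hy)

@[simp] lemma TB.assocMap_mk (m : M) (n : N) (p : P) :
    TB.assocMap k B M N P (TB.mk k B (TB k B M N) P (TB.mk k B M N m n) p)
      = TB.mk k B M (TB k B N P) m (TB.mk k B N P n p) := rfl

end Assoc

end TBLib

set_option maxHeartbeats 1600000

section Stmt5

variable (k B : Type) [Field k] [Ring B] [Algebra k B]
variable (U : Type) [AddCommGroup U] [Module k U] [Module B U] [Module Bᵐᵒᵖ U]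
  [IsScalarTower k B U] [IsScalarTower k Bᵐᵒᵖ U] [SMulCommClass B Bᵐᵒᵖ U]
variable (d0 : B →ₗ[k] U) (d1 : U →ₗ[k] TB k B U U)

/-- The sub-bimodule `(d(B)) ⊆ U₁` generated by the degree-one component of `d`
applied to `B`. -/
def dSub : Submodule k U :=
  Submodule.span k {x | ∃ (a b c : B), x = a • (op b • d0 c)}

lemma dSub_smul_left (b : B) {x : U} (hx : x ∈ dSub k B U d0) :
    b • x ∈ dSub k B U d0 := by
  induction hx using Submodule.span_induction with
  | mem y hy =>
    obtain ⟨a, b', c, rfl⟩ := hy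
    exact Submodule.subset_span ⟨b * a, b', c, by rw [mul_smul]⟩
  | zero => simp
  | add y z _ _ hy hz => rw [smul_add]; exact Submodule.add_mem _ hy hz
  | smul c y _ hy => rw [smul_comm b c y]; exact Submodule.smul_mem _ c hy

lemma dSub_smul_right (b : B) {x : U} (hx : x ∈ dSub k B U d0) :
    op b • x ∈ dSub k B U d0 := by
  induction hx using Submodule.span_induction with
  | mem y hy =>
    obtain ⟨a, b', c, rfl⟩ := hy
    refine Submodule.subset_span ⟨a, b' * b, c, ?_⟩
    rw [← smul_comm a (op b) (op b' • d0 c), smul_smul, ← MulOpposite.op_mul]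
  | zero => simp
  | add y z _ _ hy hz => rw [smul_add]; exact Submodule.add_mem _ hy hz
  | smul c y _ hy => rw [smul_comm (op b) c y]; exact Submodule.smul_mem _ c hy

/-- The quotient bimodule `W = U₁ / (d(B))`. -/
abbrev Wq : Type := U ⧸ dSub k B U d0

noncomputable def lActW (b : B) : Wq k B U d0 →ₗ[k] Wq k B U d0 :=
  Submodule.mapQ _ _ (smulLin k U b) (fun x hx => dSub_smul_left k B U d0 b hx)

@[simp] lemma lActW_mk (b : B) (u : U) :
    lActW k B U d0 b (Submodule.Quotient.mk u) = (Submodule.Quotient.mk (b • u) : Wq k B U d0) := by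
  rfl

noncomputable def rActW (b : Bᵐᵒᵖ) : Wq k B U d0 →ₗ[k] Wq k B U d0 :=
  Submodule.mapQ _ _ (smulLin k U b) (fun x hx => dSub_smul_right k B U d0 b.unop (by simpa using hx))

@[simp] lemma rActW_mk (b : Bᵐᵒᵖ) (u : U) :
    rActW k B U d0 b (Submodule.Quotient.mk u) = (Submodule.Quotient.mk (b • u) : Wq k B U d0) := by
  rfl

noncomputable instance : Module B (Wq k B U d0) where
  smul b x := lActW k B U d0 b x
  one_smul x := by
    obtain ⟨u, rfl⟩ := Submodule.Quotient.mk_surjective _ x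
    show lActW k B U d0 1 _ = _
    simp
  mul_smul a b x := by
    obtain ⟨u, rfl⟩ := Submodule.Quotient.mk_surjective _ x
    show lActW k B U d0 (a * b) _ = lActW k B U d0 a (lActW k B U d0 b _)
    simp [mul_smul]
  smul_zero b := map_zero (lActW k B U d0 b)
  smul_add b x y := map_add (lActW k B U d0 b) x y
  add_smul a b x := by
    obtain ⟨u, rfl⟩ := Submodule.Quotient.mk_surjective _ x
    show lActW k B U d0 (a + b) _ = lActW k B U d0 a _ + lActW k B U d0 b _
    simp [add_smul]
  zero_smul x := by
    obtain ⟨u, rfl⟩ := Submodule.Quotient.mk_surjective _ x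
    show lActW k B U d0 0 _ = 0
    simp

@[simp] lemma smul_mkQ (b : B) (u : U) :
    b • (Submodule.Quotient.mk u : Wq k B U d0) = Submodule.Quotient.mk (b • u) :=
  lActW_mk k B U d0 b u

noncomputable instance : Module Bᵐᵒᵖ (Wq k B U d0) where
  smul b x := rActW k B U d0 b x
  one_smul x := by
    obtain ⟨u, rfl⟩ := Submodule.Quotient.mk_surjective _ x
    show rActW k B U d0 1 _ = _
    simp
  mul_smul a b x := by
    obtain ⟨u, rfl⟩ := Submodule.Quotient.mk_surjective _ x
    show rActW k B U d0 (a * b) _ = rActW k B U d0 a (rActW k B U d0 b _)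
    simp [mul_smul]
  smul_zero b := map_zero (rActW k B U d0 b)
  smul_add b x y := map_add (rActW k B U d0 b) x y
  add_smul a b x := by
    obtain ⟨u, rfl⟩ := Submodule.Quotient.mk_surjective _ x
    show rActW k B U d0 (a + b) _ = rActW k B U d0 a _ + rActW k B U d0 b _
    simp [add_smul]
  zero_smul x := by
    obtain ⟨u, rfl⟩ := Submodule.Quotient.mk_surjective _ x
    show rActW k B U d0 0 _ = 0
    simp

@[simp] lemma op_smul_mkQ (b : Bᵐᵒᵖ) (u : U) :
    b • (Submodule.Quotient.mk u : Wq k B U d0) = Submodule.Quotient.mk (b • u) :=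
  rActW_mk k B U d0 b u

instance : IsScalarTower k B (Wq k B U d0) := by
  constructor
  intro c b x
  obtain ⟨u, rfl⟩ := Submodule.Quotient.mk_surjective _ x
  simp [smul_assoc]

instance : IsScalarTower k Bᵐᵒᵖ (Wq k B U d0) := by
  constructor
  intro c b x
  obtain ⟨u, rfl⟩ := Submodule.Quotient.mk_surjective _ x
  simp [smul_assoc]

instance : SMulCommClass B Bᵐᵒᵖ (Wq k B U d0) := by
  constructor
  intro b b' x
  obtain ⟨u, rfl⟩ := Submodule.Quotient.mk_surjective _ x
  simp only [op_smul_mkQ, smul_mkQ]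
  exact congrArg _ (smul_comm b b' u)

lemma mkQ_equiv_left (b : B) (u : U) :
    (dSub k B U d0).mkQ (b • u) = b • (dSub k B U d0).mkQ u :=
  (smul_mkQ k B U d0 b u).symm

lemma mkQ_equiv_right (b : B) (u : U) :
    (dSub k B U d0).mkQ (op b • u) = op b • (dSub k B U d0).mkQ u :=
  (op_smul_mkQ k B U d0 (op b) u).symm

/-- The bilinear map underlying the degree-one component of `d` on `U₁ ⊗_B U₁`
(Koszul–Quillen signs: `d(u ⊗ u') = d(u) ⊗ u' − u ⊗ d(u')`), with values in the
triple tensor product. -/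
noncomputable def D2bil : U →ₗ[k] U →ₗ[k] TB k B U (TB k B U U) :=
  LinearMap.mk₂ k
    (fun u v => TB.assocMap k B U U U (TB.mk k B (TB k B U U) U (d1 u) v)
      - TB.mk k B U (TB k B U U) u (d1 v))
    (fun u1 u2 v => by
      simp only [map_add, LinearMap.add_apply]
      abel)
    (fun c u v => by
      simp only [map_smul, LinearMap.smul_apply, smul_sub])
    (fun u v1 v2 => by
      simp only [map_add, LinearMap.add_apply]
      abel)
    (fun c u v => by
      simp only [map_smul, LinearMap.smul_apply, smul_sub])

/-- The differential on `U₁ ⊗_B U₁` with values in `U₁ ⊗_B U₁ ⊗_B U₁`. -/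
noncomputable def D2
    (hd1l : ∀ (b : B) (u : U), d1 (b • u) = TB.mk k B U U (d0 b) u + b • d1 u)
    (hd1r : ∀ (b : B) (u : U), d1 (op b • u) = op b • d1 u - TB.mk k B U U u (d0 b)) :
    TB k B U U →ₗ[k] TB k B U (TB k B U U) :=
  TB.lift k B U U (D2bil k B U d1) (by
    intro b u v
    show TB.assocMap k B U U U (TB.mk k B (TB k B U U) U (d1 (op b • u)) v)
        - TB.mk k B U (TB k B U U) (op b • u) (d1 v)
      = TB.assocMap k B U U U (TB.mk k B (TB k B U U) U (d1 u) (b • v))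
        - TB.mk k B U (TB k B U U) u (d1 (b • v))
    rw [hd1r b u, hd1l b v]
    simp only [map_sub, map_add, LinearMap.sub_apply, LinearMap.add_apply,
      TB.mk_balance, TB.assocMap_mk, map_add]
    abel)

/- After projecting to `W ⊗_B W` the terms `d₀ b ⊗ u` and `u ⊗ d₀ b` produced by the Leibniz rule
vanish, so `(π ⊗ π) ∘ d₁` is `B`-bilinear, and it kills the sub-bimodule generated by `d₀(B)`
because `d₁ ∘ d₀ = 0`; it therefore descends to `μ`. Coassociativity is the projection of
`d² = 0` on `U₁`: applying `π ⊗ π ⊗ π` to the degree-two component `d(d₁ u)` gives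
`(μ ⊗ 1 − 1 ⊗ μ)(μ (π u))`. -/

section TBMap

variable {M N M' N' : Type}
  [AddCommGroup M] [Module k M] [Module Bᵐᵒᵖ M] [IsScalarTower k Bᵐᵒᵖ M]
  [AddCommGroup N] [Module k N] [Module B N] [IsScalarTower k B N]
  [AddCommGroup M'] [Module k M'] [Module Bᵐᵒᵖ M'] [IsScalarTower k Bᵐᵒᵖ M']
  [AddCommGroup N'] [Module k N'] [Module B N'] [IsScalarTower k B N']
  (f : M →ₗ[k] M') (g : N →ₗ[k] N')
  (hf : ∀ (b : B) (m : M), f (op b • m) = op b • f m)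
  (hg : ∀ (b : B) (n : N), g (b • n) = b • g n)

theorem TB.map_smul [Module B M] [IsScalarTower k B M] [SMulCommClass B Bᵐᵒᵖ M]
    [Module B M'] [IsScalarTower k B M'] [SMulCommClass B Bᵐᵒᵖ M']
    (hfl : ∀ (b : B) (m : M), f (b • m) = b • f m) (b : B) (x : TB k B M N) :
    TB.map k B M N f g hf hg (b • x) = b • TB.map k B M N f g hf hg x := by
  induction x using TB.ind k B M N with
  | h0 => simp
  | hmk m n => simp [hfl]
  | hadd x y hx hy => rw [smul_add, map_add, map_add, smul_add, hx, hy]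

theorem TB.map_op_smul [Module Bᵐᵒᵖ N] [IsScalarTower k Bᵐᵒᵖ N] [SMulCommClass B Bᵐᵒᵖ N]
    [Module Bᵐᵒᵖ N'] [IsScalarTower k Bᵐᵒᵖ N'] [SMulCommClass B Bᵐᵒᵖ N']
    (hgr : ∀ (b : B) (n : N), g (op b • n) = op b • g n) (b : B) (x : TB k B M N) :
    TB.map k B M N f g hf hg (op b • x) = op b • TB.map k B M N f g hf hg x := by
  induction x using TB.ind k B M N with
  | h0 => simp
  | hmk m n => simp [hgr]
  | hadd x y hx hy => rw [smul_add, map_add, map_add, smul_add, hx, hy]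

theorem TB.assocMap_map {P P' : Type}
    [AddCommGroup P] [Module k P] [Module B P] [IsScalarTower k B P]
    [AddCommGroup P'] [Module k P'] [Module B P'] [IsScalarTower k B P']
    [Module Bᵐᵒᵖ N] [IsScalarTower k Bᵐᵒᵖ N] [SMulCommClass B Bᵐᵒᵖ N]
    [Module Bᵐᵒᵖ N'] [IsScalarTower k Bᵐᵒᵖ N'] [SMulCommClass B Bᵐᵒᵖ N']
    (hgr : ∀ (b : B) (n : N), g (op b • n) = op b • g n)
    (h : P →ₗ[k] P') (hh : ∀ (b : B) (p : P), h (b • p) = b • h p) (x : TB k B (TB k B M N) P) :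
    TB.assocMap k B M' N' P'
        (TB.map k B (TB k B M N) P (TB.map k B M N f g hf hg) h
          (TB.map_op_smul k B f g hf hg hgr) hh x) =
      TB.map k B M (TB k B N P) f (TB.map k B N P g h hgr hh) hf
        (TB.map_smul k B g h hgr hh hg) (TB.assocMap k B M N P x) := by
  induction x using TB.ind k B (TB k B M N) P with
  | h0 => simp
  | hmk y p =>
    induction y using TB.ind k B M N with
    | h0 => simp
    | hmk m n => rfl
    | hadd y z hy hz => simp only [map_add, LinearMap.add_apply, hy, hz]
  | hadd x y hx hy => rw [map_add, map_add, map_add, map_add, hx, hy]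

end TBMap

@[simp] lemma mk_d0_eq_zero (b : B) : (Submodule.Quotient.mk (d0 b) : Wq k B U d0) = 0 :=
  (Submodule.Quotient.mk_eq_zero _).mpr (Submodule.subset_span ⟨1, 1, b, by simp⟩)

noncomputable def tensorMkQ : TB k B U U →ₗ[k] TB k B (Wq k B U d0) (Wq k B U d0) :=
  TB.map k B U U (dSub k B U d0).mkQ (dSub k B U d0).mkQ
    (mkQ_equiv_right k B U d0) (mkQ_equiv_left k B U d0)

@[simp] lemma tensorMkQ_mk (u v : U) :
    tensorMkQ k B U d0 (TB.mk k B U U u v)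
      = TB.mk k B (Wq k B U d0) (Wq k B U d0) ((dSub k B U d0).mkQ u) ((dSub k B U d0).mkQ v) :=
  rfl

lemma tensorMkQ_smul (b : B) (x : TB k B U U) :
    tensorMkQ k B U d0 (b • x) = b • tensorMkQ k B U d0 x :=
  TB.map_smul k B _ _ _ _ (mkQ_equiv_left k B U d0) b x

lemma tensorMkQ_op_smul (b : B) (x : TB k B U U) :
    tensorMkQ k B U d0 (op b • x) = op b • tensorMkQ k B U d0 x :=
  TB.map_op_smul k B _ _ _ _ (mkQ_equiv_right k B U d0) b x

lemma dSub_le_ker_tensorMkQ_comp_d1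
    (hd1l : ∀ (b : B) (u : U), d1 (b • u) = TB.mk k B U U (d0 b) u + b • d1 u)
    (hd1r : ∀ (b : B) (u : U), d1 (op b • u) = op b • d1 u - TB.mk k B U U u (d0 b))
    (hd2B : ∀ b : B, d1 (d0 b) = 0) :
    dSub k B U d0 ≤ LinearMap.ker (tensorMkQ k B U d0 ∘ₗ d1) := by
  refine Submodule.span_le.mpr ?_
  rintro _ ⟨a, b, c, rfl⟩
  simp [hd1l, hd1r, hd2B]

section Comul

variable (hd1l : ∀ (b : B) (u : U), d1 (b • u) = TB.mk k B U U (d0 b) u + b • d1 u)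
  (hd1r : ∀ (b : B) (u : U), d1 (op b • u) = op b • d1 u - TB.mk k B U U u (d0 b))
  (hd2B : ∀ b : B, d1 (d0 b) = 0)

noncomputable def comul : Wq k B U d0 →ₗ[k] TB k B (Wq k B U d0) (Wq k B U d0) :=
  (dSub k B U d0).liftQ (tensorMkQ k B U d0 ∘ₗ d1)
    (dSub_le_ker_tensorMkQ_comp_d1 k B U d0 d1 hd1l hd1r hd2B)

lemma comul_mk (u : U) :
    comul k B U d0 d1 hd1l hd1r hd2B (Submodule.Quotient.mk u) = tensorMkQ k B U d0 (d1 u) :=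
  rfl

lemma comul_smul (b : B) (w : Wq k B U d0) :
    comul k B U d0 d1 hd1l hd1r hd2B (b • w) = b • comul k B U d0 d1 hd1l hd1r hd2B w := by
  obtain ⟨u, rfl⟩ := Submodule.Quotient.mk_surjective _ w
  simp [comul_mk, hd1l, tensorMkQ_smul]

lemma comul_op_smul (b : B) (w : Wq k B U d0) :
    comul k B U d0 d1 hd1l hd1r hd2B (op b • w) = op b • comul k B U d0 d1 hd1l hd1r hd2B w := by
  obtain ⟨u, rfl⟩ := Submodule.Quotient.mk_surjective _ w
  simp [comul_mk, hd1r, tensorMkQ_op_smul]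

lemma map_mkQ_tensorMkQ_comp_D2 :
    TB.map k B U (TB k B U U) (dSub k B U d0).mkQ (tensorMkQ k B U d0)
        (mkQ_equiv_right k B U d0) (tensorMkQ_smul k B U d0) ∘ₗ D2 k B U d0 d1 hd1l hd1r =
      (TB.assocMap k B (Wq k B U d0) (Wq k B U d0) (Wq k B U d0) ∘ₗ
          TB.map k B (Wq k B U d0) (Wq k B U d0) (comul k B U d0 d1 hd1l hd1r hd2B) LinearMap.id
            (comul_op_smul k B U d0 d1 hd1l hd1r hd2B) (fun _ _ => rfl) -
        TB.map k B (Wq k B U d0) (Wq k B U d0) LinearMap.id (comul k B U d0 d1 hd1l hd1r hd2B)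
            (fun _ _ => rfl) (comul_smul k B U d0 d1 hd1l hd1r hd2B)) ∘ₗ
        tensorMkQ k B U d0 := by
  refine TB.hom_ext k B U U fun u v => ?_
  have hassoc := TB.assocMap_map k B (dSub k B U d0).mkQ (dSub k B U d0).mkQ
    (mkQ_equiv_right k B U d0) (mkQ_equiv_left k B U d0) (mkQ_equiv_right k B U d0)
    (dSub k B U d0).mkQ (mkQ_equiv_left k B U d0) (TB.mk k B (TB k B U U) U (d1 u) v)
  have hD2 : D2 k B U d0 d1 hd1l hd1r (TB.mk k B U U u v) =
      TB.assocMap k B U U U (TB.mk k B (TB k B U U) U (d1 u) v) - TB.mk k B U (TB k B U U) u (d1 v) :=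
    rfl
  rw [LinearMap.comp_apply, hD2, map_sub, LinearMap.comp_apply, LinearMap.sub_apply]
  exact congrArg₂ (· - ·) hassoc.symm rfl

end Comul

theorem dg_tensor_algebra_gives_prebox
    (hd1l : ∀ (b : B) (u : U), d1 (b • u) = TB.mk k B U U (d0 b) u + b • d1 u)
    (hd1r : ∀ (b : B) (u : U), d1 (op b • u) = op b • d1 u - TB.mk k B U U u (d0 b))
    (hd2B : ∀ b : B, d1 (d0 b) = 0)
    (hd2U : ∀ u : U, D2 k B U d0 d1 hd1l hd1r (d1 u) = 0) :
    ∃ μ : Wq k B U d0 →ₗ[k] TB k B (Wq k B U d0) (Wq k B U d0),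
      (∀ u : U, μ ((dSub k B U d0).mkQ u)
        = TB.map k B U U (dSub k B U d0).mkQ (dSub k B U d0).mkQ
            (mkQ_equiv_right k B U d0) (mkQ_equiv_left k B U d0) (d1 u)) ∧
      ∃ (hl : ∀ (b : B) (w : Wq k B U d0), μ (b • w) = b • μ w)
        (hr : ∀ (b : B) (w : Wq k B U d0), μ (op b • w) = op b • μ w),
        ∀ w : Wq k B U d0,
          TB.assocMap k B (Wq k B U d0) (Wq k B U d0) (Wq k B U d0)
            ((TB.map k B (Wq k B U d0) (Wq k B U d0) μ LinearMap.id hr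
              (fun _ _ => rfl)) (μ w))
          = (TB.map k B (Wq k B U d0) (Wq k B U d0) LinearMap.id μ
              (fun _ _ => rfl) hl) (μ w) := by
  refine ⟨comul k B U d0 d1 hd1l hd1r hd2B, fun _ => rfl, comul_smul k B U d0 d1 hd1l hd1r hd2B,
    comul_op_smul k B U d0 d1 hd1l hd1r hd2B, fun w => ?_⟩
  obtain ⟨u, rfl⟩ := Submodule.Quotient.mk_surjective _ w
  have h := LinearMap.congr_fun (map_mkQ_tensorMkQ_comp_D2 k B U d0 d1 hd1l hd1r hd2B) (d1 u)
  rw [LinearMap.comp_apply, hd2U, map_zero] at h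
  exact sub_eq_zero.mp h.symm

end Stmt5
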